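/- arXiv:1901.08210 — 5 statements merged into one kernel-verified Lean document; each statement's English description precedes it below -/
import Mathlib

section
/- For every natural number k, the 2k-th moment of the standard semicircular distribution equals the k-th Catalan number: ∫_{-2}^{2} x^{2k} · √(4 − x²)/(2π) dx = catalan(k) = (1/(k+1))·binom(2k, k). -/
/-! Write `M n = ∫_{-2}^{2} xⁿ √(4 - x²) dx`. Integrating `x^(n+1)` against the derivative
`-3x√(4 - x²)` of `(4 - x²)^{3/2}`, whose boundary values vanish, gives the recurrence
`(n + 4) M (n + 2) = 4 (n + 1) M n`. With `M 0 = 2π` (area of a half-disc of radius 2) this is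
exactly the recurrence `(k + 2) C (k + 1) = 2 (2k + 1) C k` of the Catalan numbers. -/

open intervalIntegral Real

theorem add_two_mul_catalan_succ (n : ℕ) :
    (n + 2) * catalan (n + 1) = 2 * (2 * n + 1) * catalan n := by
  refine Nat.eq_of_mul_eq_mul_left n.succ_pos ?_
  calc (n + 1) * ((n + 2) * catalan (n + 1))
      = (n + 1) * (n + 1).centralBinom := by rw [← succ_mul_catalan_eq_centralBinom]
    _ = 2 * (2 * n + 1) * ((n + 1) * catalan n) := by
        rw [Nat.succ_mul_centralBinom_succ, succ_mul_catalan_eq_centralBinom]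
    _ = (n + 1) * (2 * (2 * n + 1) * catalan n) := by ring

theorem Real.rpow_three_halves {t : ℝ} (ht : 0 ≤ t) : t ^ (3 / 2 : ℝ) = t * √t := by
  rw [show (3 / 2 : ℝ) = 1 + 1 / 2 by norm_num, rpow_add' ht (by norm_num), rpow_one,
    sqrt_eq_rpow]

theorem hasDerivAt_sub_sq_rpow_three_halves (a x : ℝ) :
    HasDerivAt (fun y : ℝ => (a - y ^ 2) ^ (3 / 2 : ℝ)) (-(3 * x * √(a - x ^ 2))) x := by
  have hin : HasDerivAt (fun y : ℝ => a - y ^ 2) (-(2 * x)) x := by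
    simpa using (hasDerivAt_pow 2 x).const_sub a
  refine ((hasDerivAt_rpow_const (p := 3 / 2) (Or.inr (by norm_num))).comp x hin).congr_deriv ?_
  rw [show (3 / 2 : ℝ) - 1 = 1 / 2 by norm_num, ← sqrt_eq_rpow]
  ring

noncomputable def semicircleMoment (n : ℕ) : ℝ := ∫ x in (-2 : ℝ)..2, x ^ n * √(4 - x ^ 2)

theorem semicircleMoment_zero : semicircleMoment 0 = 2 * π := by
  have h : (fun x : ℝ => x ^ 0 * √(4 - x ^ 2)) = fun x => 2 * √(1 - (x / 2) ^ 2) := by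
    ext x
    rw [pow_zero, one_mul, show (4 : ℝ) - x ^ 2 = 2 ^ 2 * (1 - (x / 2) ^ 2) by ring,
      sqrt_mul (by positivity), sqrt_sq (by norm_num)]
  rw [semicircleMoment, h, integral_const_mul,
    integral_comp_div (fun x => √(1 - x ^ 2)) two_ne_zero]
  norm_num [integral_sqrt_one_sub_sq]
  ring

theorem intervalIntegrable_pow_mul_sqrt (n : ℕ) (a b c : ℝ) :
    IntervalIntegrable (fun x : ℝ => x ^ n * √(c - x ^ 2)) MeasureTheory.volume a b :=
  (by fun_prop : Continuous _).intervalIntegrable a b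

theorem semicircleMoment_add_two (n : ℕ) :
    (n + 4) * semicircleMoment (n + 2) = 4 * (n + 1) * semicircleMoment n := by
  have hu : ∀ x ∈ Set.uIcc (-2 : ℝ) 2,
      HasDerivAt (fun y : ℝ => y ^ (n + 1)) ((n + 1) * x ^ n) x :=
    fun x _ => by simpa using hasDerivAt_pow (n + 1) x
  have hv : ∀ x ∈ Set.uIcc (-2 : ℝ) 2, HasDerivAt (fun y : ℝ => (4 - y ^ 2) ^ (3 / 2 : ℝ))
      (-(3 * x * √(4 - x ^ 2))) x :=
    fun x _ => hasDerivAt_sub_sq_rpow_three_halves 4 x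
  have hparts := integral_mul_deriv_eq_deriv_mul hu hv
    ((by fun_prop : Continuous _).intervalIntegrable _ _)
    ((by fun_prop : Continuous _).intervalIntegrable _ _)
  have hleft : (∫ x in (-2 : ℝ)..2, x ^ (n + 1) * -(3 * x * √(4 - x ^ 2)))
      = -3 * semicircleMoment (n + 2) := by
    rw [semicircleMoment, ← integral_const_mul]
    exact integral_congr fun x _ => by ring
  have hright : (∫ x in (-2 : ℝ)..2, ((n : ℝ) + 1) * x ^ n * (4 - x ^ 2) ^ (3 / 2 : ℝ))
      = (n + 1) * (4 * semicircleMoment n - semicircleMoment (n + 2)) := by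
    rw [semicircleMoment, semicircleMoment, ← integral_const_mul, ← integral_sub
      ((intervalIntegrable_pow_mul_sqrt n _ _ 4).const_mul 4)
      (intervalIntegrable_pow_mul_sqrt (n + 2) _ _ 4), ← integral_const_mul]
    refine integral_congr fun x hx => ?_
    rw [Set.uIcc_of_le (by norm_num), Set.mem_Icc] at hx
    rw [rpow_three_halves (by nlinarith)]
    ring
  rw [hleft, hright] at hparts
  norm_num at hparts
  linarith

theorem semicircleMoment_two_mul (k : ℕ) : semicircleMoment (2 * k) = 2 * π * catalan k := by
  induction k with
  | zero => simp [semicircleMoment_zero]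
  | succ k ih =>
    have hrec := semicircleMoment_add_two (2 * k)
    have hcat : ((k : ℝ) + 2) * catalan (k + 1) = 2 * (2 * k + 1) * catalan k := by
      exact_mod_cast add_two_mul_catalan_succ k
    rw [show 2 * k + 2 = 2 * (k + 1) by ring, ih] at hrec
    push_cast at hrec ⊢
    have hk : (2 * (k : ℝ) + 4) ≠ 0 := by positivity
    apply mul_left_cancel₀ hk
    linear_combination hrec - 4 * π * hcat

/-- The even moments of the standard semicircular distribution (density
`x ↦ √(4 − x²)/(2π)` on `[−2, 2]`) are the Catalan numbers:
`∫_{-2}^{2} x^{2k} √(4 − x²)/(2π) dx = catalan k = (1/(k+1))·C(2k, k)`. -/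
theorem semicircular_even_moment (k : ℕ) :
    (∫ x in (-2 : ℝ)..2, x ^ (2 * k) * (Real.sqrt (4 - x ^ 2) / (2 * Real.pi)))
      = (catalan k : ℝ) ∧
    (catalan k : ℝ) = (1 / (k + 1 : ℝ)) * (Nat.choose (2 * k) k : ℝ) := by
  constructor
  · simp_rw [← mul_div_assoc, integral_div]
    rw [← semicircleMoment, semicircleMoment_two_mul]
    field_simp
  · have h : ((k : ℝ) + 1) * catalan k = Nat.choose (2 * k) k := by
      exact_mod_cast succ_mul_catalan_eq_centralBinom k
    field_simp
    linarith
end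

section
/- Over R = ℂ with L = 1 and one system variable Y₁, the noncommutative polynomial Q₁ = Σ_{i=1}^{n} (X_i·(Y₁ + 1))² ∈ ℂ⟨X ⊔ {Y₁}⟩ is a proper algebraic system (its coefficients at the empty word and at the one-letter word Y₁ vanish), and the series P_semi : F(X) → ℂ defined by P_semi(F) = N(F) for F ≠ e and P_semi(e) = 0 is a proper solution: P_semi = Σ_{i=1}^{n} (X_i·(P_semi + 1))², where the right-hand side is computed by coefficientwise (finite convolution) multiplication of series. -/
open scoped BigOperators

/-- Words over the alphabet `X = {X_1, ..., X_n}`. -/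
abbrev Word (n : ℕ) := List (Fin n)

/-- Convolution (Cauchy) product of two noncommutative series, computed coefficientwise:
`(a·b)(F) = Σ_{F = G·H} a(G)·b(H)`. -/
def mulS {n : ℕ} {R : Type*} [Ring R] (a b : Word n → R) : Word n → R :=
  fun F => ∑ i ∈ Finset.range (F.length + 1), a (F.take i) * b (F.drop i)

/-- The series `1` (coefficient `1` at the empty word). -/
def oneS {n : ℕ} {R : Type*} [Ring R] : Word n → R := fun F => if F = [] then 1 else 0

/-- Product of a list of series. -/
def prodS {n : ℕ} {R : Type*} [Ring R] : List (Word n → R) → (Word n → R)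
  | [] => oneS
  | a :: l => mulS a (prodS l)

/-- The series of the generator `X_i`. -/
def genS {n : ℕ} {R : Type*} [Ring R] (i : Fin n) : Word n → R :=
  fun F => if F = [i] then 1 else 0

/-- `P` is a noncrossing pairing of the word `F`. -/
def IsNCPairing {n : ℕ} (F : Word n) (P : Finset (Fin F.length × Fin F.length)) : Prop :=
  (∀ p ∈ P, p.1 < p.2 ∧ F.get p.1 = F.get p.2) ∧
  (∀ i : Fin F.length, ∃! p : Fin F.length × Fin F.length, p ∈ P ∧ (p.1 = i ∨ p.2 = i)) ∧
  (∀ p ∈ P, ∀ q ∈ P, ¬ (p.1 < q.1 ∧ q.1 < p.2 ∧ p.2 < q.2))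

/-- `N(F)`: the number of noncrossing pairings of the word `F` (with `N(e) = 1`);
it equals the moment `τ(F(s₁,…,sₙ))` of free standard semicircular elements. -/
noncomputable def ncCount {n : ℕ} (F : Word n) : ℕ :=
  Nat.card {P : Finset (Fin F.length × Fin F.length) // IsNCPairing F P}

/-- Interpretation of a letter of `X ⊔ Y`. -/
def letterS {n : ℕ} {R : Type*} [Ring R] {σ : Type*} (p : σ → Word n → R) :
    (Fin n ⊕ σ) → (Word n → R)
  | Sum.inl i => genS i
  | Sum.inr j => p j

/-- Coefficientwise substitution of the series `p j` for the variables `Y_j` in a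
noncommutative polynomial `Q ∈ R⟨X ⊔ Y⟩`. -/
noncomputable def substS {n : ℕ} {R : Type*} [Ring R] {σ : Type*}
    (Q : MonoidAlgebra R (FreeMonoid (Fin n ⊕ σ))) (p : σ → Word n → R) : Word n → R :=
  fun F => ∑ W ∈ Q.coeff.support, Q.coeff W * prodS ((FreeMonoid.toList W).map (letterS p)) F

/-- The moment series of free standard semicircular elements:
`P_semi(F) = N(F)` for `F ≠ e` and `P_semi(e) = 0`. -/
noncomputable def Psemi (n : ℕ) : Word n → ℂ :=
  fun F => if F = [] then 0 else (ncCount F : ℂ)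

/-- The polynomial `Q₁ = Σ_{i=1}^{n} (X_i·(Y₁ + 1))² ∈ ℂ⟨X ⊔ {Y₁}⟩`. -/
noncomputable def Qsemi (n : ℕ) : MonoidAlgebra ℂ (FreeMonoid (Fin n ⊕ Fin 1)) :=
  ∑ i : Fin n,
    (MonoidAlgebra.single (FreeMonoid.of (Sum.inl i)) (1 : ℂ) *
      (MonoidAlgebra.single (FreeMonoid.of (Sum.inr (0 : Fin 1))) (1 : ℂ) + 1)) ^ 2

/-!
Write `N` for the series `F ↦ N(F)`, so that `P_semi + 1 = N`. In a noncrossing pairing of a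
word `a T`, the first letter is paired with some position `m + 1` where `T` has the letter `a`;
since no block crosses `{0, m + 1}`, the other blocks pair the subword `T_{<m}` strictly inside
and the subword `T_{>m}` after it independently. Hence
`N(a T) = ∑_{T_m = a} N(T_{<m}) N(T_{>m})`, i.e. `P_semi = ∑ᵢ Xᵢ N Xᵢ N`, and expanding
`∑ᵢ (Xᵢ (P_semi + 1))²` into its four monomials gives exactly this series.
-/

open Finset

theorem FreeMonoid.single_apply_of_length_ne {α M : Type*} [Zero M] {w u : FreeMonoid α}
    (h : w.length ≠ u.length) (c : M) : Finsupp.single w c u = 0 :=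
  Finsupp.single_eq_of_ne fun hu => h (congrArg FreeMonoid.length hu).symm

section SeriesAlgebra

variable {n : ℕ} {R : Type*} [Ring R]

theorem mulS_oneS (a : Word n → R) : mulS a oneS = a := by
  funext F
  rw [mulS, sum_eq_single_of_mem F.length (by simp)]
  · simp [oneS]
  · intro k hk hne
    have : F.drop k ≠ [] := by simp at hk ⊢; omega
    simp [oneS, this]

theorem oneS_mulS (a : Word n → R) : mulS oneS a = a := by
  funext F
  rw [mulS, sum_eq_single_of_mem 0 (by simp)]
  · simp [oneS]
  · intro k hk hne
    have : F.take k ≠ [] := by rw [← List.length_pos_iff, List.length_take]; simp at hk; omega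
    simp [oneS, this]

theorem mulS_add (a b c : Word n → R) : mulS a (b + c) = mulS a b + mulS a c := by
  funext F; simp [mulS, mul_add, sum_add_distrib]

theorem add_mulS (a b c : Word n → R) : mulS (a + b) c = mulS a c + mulS b c := by
  funext F; simp [mulS, add_mul, sum_add_distrib]

theorem genS_mulS_nil (i : Fin n) (a : Word n → R) : mulS (genS i) a [] = 0 := by
  simp [mulS, genS]

theorem genS_mulS_cons (i : Fin n) (a : Word n → R) (f : Fin n) (G : Word n) :
    mulS (genS i) a (f :: G) = if f = i then a G else 0 := by
  rw [mulS, sum_eq_single_of_mem 1 (by simp)]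
  · by_cases hf : f = i <;> simp [genS, hf]
  · rintro (_ | k) hk hk1
    · simp [genS]
    · have : G.take k ≠ [] := by
        rw [← List.length_pos_iff, List.length_take]; simp at hk hk1; omega
      simp [genS, this]

variable {σ : Type*}

theorem substS_apply (Q : MonoidAlgebra R (FreeMonoid (Fin n ⊕ σ))) (p : σ → Word n → R)
    (F : Word n) :
    substS Q p F = Q.coeff.sum fun W c => c * prodS ((FreeMonoid.toList W).map (letterS p)) F :=
  rfl

theorem substS_add (Q Q' : MonoidAlgebra R (FreeMonoid (Fin n ⊕ σ))) (p : σ → Word n → R) :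
    substS (Q + Q') p = substS Q p + substS Q' p := by
  funext F
  rw [Pi.add_apply, substS_apply, substS_apply, substS_apply, MonoidAlgebra.coeff_add,
    Finsupp.sum_add_index' (by simp) (by simp [add_mul])]

theorem substS_sum {ι : Type*} (s : Finset ι)
    (Q : ι → MonoidAlgebra R (FreeMonoid (Fin n ⊕ σ))) (p : σ → Word n → R) :
    substS (∑ i ∈ s, Q i) p = ∑ i ∈ s, substS (Q i) p :=
  map_sum (AddMonoidHom.mk' (substS · p) (substS_add · · p)) Q s

theorem substS_single (w : FreeMonoid (Fin n ⊕ σ)) (c : R) (p : σ → Word n → R) :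
    substS (MonoidAlgebra.single w c) p = c • prodS ((FreeMonoid.toList w).map (letterS p)) := by
  funext F
  rw [substS_apply, MonoidAlgebra.coeff_single, Finsupp.sum_single_index (by simp)]
  rfl

end SeriesAlgebra

section CoversExactly

variable {α β : Type*}

def CoversExactly (S : Finset (α × α)) (U : Set α) : Prop :=
  (∀ i ∈ U, ∃! p, p ∈ S ∧ (p.1 = i ∨ p.2 = i)) ∧ ∀ p ∈ S, p.1 ∈ U ∧ p.2 ∈ U

theorem coversExactly_singleton (x y : α) : CoversExactly {(x, y)} {x, y} := by
  refine ⟨fun i hi => ⟨(x, y), ?_, fun p hp => mem_singleton.1 hp.1⟩, by simp⟩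
  rcases hi with rfl | rfl <;> simp

theorem CoversExactly.image [DecidableEq β] {S : Finset (α × α)} {U : Set α} {e : α → β}
    (hS : CoversExactly S U) (he : Function.Injective e) :
    CoversExactly (S.image (Prod.map e e)) (e '' U) := by
  refine ⟨?_, ?_⟩
  · rintro _ ⟨k, hk, rfl⟩
    obtain ⟨p, ⟨hp, hpk⟩, huniq⟩ := hS.1 k hk
    refine ⟨Prod.map e e p, ⟨mem_image_of_mem _ hp, hpk.imp (congrArg e) (congrArg e)⟩, ?_⟩
    rintro _ ⟨hq, hqk⟩
    obtain ⟨r, hr, rfl⟩ := mem_image.1 hq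
    rw [huniq r ⟨hr, hqk.imp (@he _ _) (@he _ _)⟩]
  · intro q hq
    obtain ⟨r, hr, rfl⟩ := mem_image.1 hq
    exact ⟨Set.mem_image_of_mem e (hS.2 r hr).1, Set.mem_image_of_mem e (hS.2 r hr).2⟩

theorem CoversExactly.existsUnique_union_of_mem_left [DecidableEq α] {S T : Finset (α × α)}
    {U V : Set α} (hS : CoversExactly S U) (hT : CoversExactly T V) (hUV : Disjoint U V)
    {i : α} (hi : i ∈ U) : ∃! p, p ∈ S ∪ T ∧ (p.1 = i ∨ p.2 = i) := by
  obtain ⟨p, ⟨hp, hpi⟩, huniq⟩ := hS.1 i hi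
  refine ⟨p, ⟨mem_union_left _ hp, hpi⟩, fun q ⟨hq, hqi⟩ => ?_⟩
  rcases mem_union.1 hq with hq | hq
  · exact huniq q ⟨hq, hqi⟩
  · refine absurd ?_ (Set.disjoint_left.1 hUV hi)
    rcases hqi with rfl | rfl
    exacts [(hT.2 q hq).1, (hT.2 q hq).2]

theorem CoversExactly.union [DecidableEq α] {S T : Finset (α × α)} {U V : Set α}
    (hS : CoversExactly S U) (hT : CoversExactly T V) (hUV : Disjoint U V) :
    CoversExactly (S ∪ T) (U ∪ V) := by
  refine ⟨fun i hi => ?_, fun p hp => ?_⟩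
  · rcases hi with hi | hi
    · exact hS.existsUnique_union_of_mem_left hT hUV hi
    · rw [union_comm]
      exact hT.existsUnique_union_of_mem_left hS hUV.symm hi
  · rcases mem_union.1 hp with hp | hp
    exacts [(hS.2 p hp).imp Or.inl Or.inl, (hT.2 p hp).imp Or.inr Or.inr]

end CoversExactly

section Pairings

variable {n : ℕ}

open Classical in
theorem ncCount_eq_card (F : Word n) : ncCount F = #{P | IsNCPairing F P} := by
  rw [ncCount, Nat.card_eq_fintype_card, Fintype.card_subtype]

theorem ncCount_nil : ncCount ([] : Word n) = 1 := by
  have hempty (P : Finset (Fin ([] : Word n).length × Fin ([] : Word n).length)) : P = ∅ :=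
    eq_empty_of_forall_notMem fun q => q.1.elim0
  rw [ncCount, Nat.card_eq_one_iff_unique]
  exact ⟨⟨fun P Q => Subtype.ext ((hempty P).trans (hempty Q).symm)⟩,
    ⟨⟨∅, by simp, fun i => i.elim0, by simp⟩⟩⟩

variable {F G : Word n} {P : Finset (Fin F.length × Fin F.length)}

theorem IsNCPairing.eq_of_touch (hP : IsNCPairing F P) {p q : Fin F.length × Fin F.length}
    {i : Fin F.length} (hp : p ∈ P) (hq : q ∈ P) (hpi : p.1 = i ∨ p.2 = i)
    (hqi : q.1 = i ∨ q.2 = i) : p = q :=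
  (hP.2.1 i).unique ⟨hp, hpi⟩ ⟨hq, hqi⟩

theorem IsNCPairing.coversExactly (hP : IsNCPairing F P) : CoversExactly P Set.univ :=
  ⟨fun i _ => hP.2.1 i, fun _ _ => ⟨trivial, trivial⟩⟩

open Classical in
noncomputable def comapPairs {α β : Type*} [Fintype α] (e : α → β) (P : Finset (β × β)) :
    Finset (α × α) :=
  {q | Prod.map e e q ∈ P}

@[simp]
theorem mem_comapPairs {α β : Type*} [Fintype α] {e : α → β} {P : Finset (β × β)}
    {q : α × α} :
    q ∈ comapPairs e P ↔ Prod.map e e q ∈ P := by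
  simp [comapPairs]

theorem IsNCPairing.comap (hP : IsNCPairing F P) {e : Fin G.length → Fin F.length}
    (he : StrictMono e) (hget : ∀ k, F.get (e k) = G.get k)
    (hclosed : ∀ q ∈ P, ∀ k, (q.1 = e k ∨ q.2 = e k) → ∃ r, q = Prod.map e e r) :
    IsNCPairing G (comapPairs e P) := by
  refine ⟨fun r hr => ?_, fun k => ?_, fun r hr s hs hcross => ?_⟩
  · obtain ⟨hlt, hletter⟩ := hP.1 _ (mem_comapPairs.1 hr)
    exact ⟨he.lt_iff_lt.1 hlt, by rwa [Prod.map_fst, Prod.map_snd, hget, hget] at hletter⟩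
  · obtain ⟨q, ⟨hq, hqk⟩, huniq⟩ := hP.2.1 (e k)
    obtain ⟨r, rfl⟩ := hclosed q hq k hqk
    refine ⟨r, ⟨mem_comapPairs.2 hq, hqk.imp (he.injective ·) (he.injective ·)⟩, ?_⟩
    rintro s ⟨hs, hsk⟩
    exact he.injective.prodMap he.injective
      (huniq _ ⟨mem_comapPairs.1 hs, hsk.imp (congrArg e) (congrArg e)⟩)
  · obtain ⟨h₁, h₂, h₃⟩ := hcross
    exact hP.2.2 _ (mem_comapPairs.1 hr) _ (mem_comapPairs.1 hs) ⟨he h₁, he h₂, he h₃⟩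

end Pairings

section FirstBlock

variable {n : ℕ} (a : Fin n) {T : Word n} (m : Fin T.length)

/- Positions in `a :: T`: `0` carries `a`, `1, …, m` carry `T.take m` (via `innerPos`), `m + 1`
carries `T.get m`, and `m + 2, …` carry `T.drop (m + 1)` (via `outerPos`). -/

def innerPos (k : Fin (T.take m).length) : Fin (a :: T).length :=
  ⟨k + 1, by have := k.isLt; simp at this ⊢; omega⟩

def outerPos (k : Fin (T.drop (m + 1)).length) : Fin (a :: T).length :=
  ⟨k + (m + 2), by have := k.isLt; simp at this ⊢; omega⟩

def firstBlock : Fin (a :: T).length × Fin (a :: T).length :=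
  (⟨0, Nat.succ_pos _⟩, ⟨m + 1, Nat.succ_lt_succ m.isLt⟩)

def glue (Q₁ : Finset (Fin (T.take m).length × Fin (T.take m).length))
    (Q₂ : Finset (Fin (T.drop (m + 1)).length × Fin (T.drop (m + 1)).length)) :
    Finset (Fin (a :: T).length × Fin (a :: T).length) :=
  insert (firstBlock a m) (Q₁.image (Prod.map (innerPos a m) (innerPos a m)) ∪
    Q₂.image (Prod.map (outerPos a m) (outerPos a m)))

variable {a m}

@[simp] theorem innerPos_val (k : Fin (T.take m).length) : (innerPos a m k : ℕ) = k + 1 := rfl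

@[simp] theorem outerPos_val (k : Fin (T.drop (m + 1)).length) :
    (outerPos a m k : ℕ) = k + (m + 2) := rfl

theorem val_lt_of_take (k : Fin (T.take m).length) : (k : ℕ) < m := by
  have := k.isLt; simp at this; omega

theorem innerPos_strictMono : StrictMono (innerPos a m) := fun _ _ h => Nat.succ_lt_succ h

theorem outerPos_strictMono : StrictMono (outerPos a m) := fun _ _ h => Nat.add_lt_add_right h _

theorem get_innerPos (k : Fin (T.take m).length) :
    (a :: T).get (innerPos a m k) = (T.take m).get k := by
  simp [innerPos]

theorem get_outerPos (k : Fin (T.drop (m + 1)).length) :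
    (a :: T).get (outerPos a m k) = (T.drop (m + 1)).get k := by
  have : (k : ℕ) + (m + 2) = m + 1 + k + 1 := by omega
  simp only [outerPos, List.get_eq_getElem, this, List.getElem_cons_succ, List.getElem_drop]

theorem range_innerPos :
    Set.range (innerPos a m) = {i : Fin (a :: T).length | 1 ≤ (i : ℕ) ∧ (i : ℕ) ≤ m} := by
  ext i
  constructor
  · rintro ⟨k, rfl⟩
    have := val_lt_of_take k
    simp only [Set.mem_ofPred_eq, innerPos_val]
    omega
  · rintro ⟨h₁, h₂⟩
    exact ⟨⟨i - 1, by simp; omega⟩, Fin.ext (by simp; omega)⟩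

theorem range_outerPos :
    Set.range (outerPos a m) = {i : Fin (a :: T).length | (m : ℕ) + 2 ≤ i} := by
  ext i
  constructor
  · rintro ⟨k, rfl⟩
    simp
  · intro h
    have := i.isLt
    simp only [Set.mem_ofPred_eq, List.length_cons] at h this
    exact ⟨⟨i - (m + 2), by simp; omega⟩, Fin.ext (by simp; omega)⟩

theorem mem_glue {Q₁ : Finset (Fin (T.take m).length × Fin (T.take m).length)}
    {Q₂ : Finset (Fin (T.drop (m + 1)).length × Fin (T.drop (m + 1)).length)}
    {q : Fin (a :: T).length × Fin (a :: T).length} :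
    q ∈ glue a m Q₁ Q₂ ↔ q = firstBlock a m ∨
      (∃ r ∈ Q₁, Prod.map (innerPos a m) (innerPos a m) r = q) ∨
      ∃ r ∈ Q₂, Prod.map (outerPos a m) (outerPos a m) r = q := by
  simp only [glue, mem_insert, mem_union, mem_image]

end FirstBlock

section FirstBlockDecomposition

variable {n : ℕ} {a : Fin n} {T : Word n} {m : Fin T.length}
  {P : Finset (Fin (a :: T).length × Fin (a :: T).length)}
  {Q₁ : Finset (Fin (T.take m).length × Fin (T.take m).length)}
  {Q₂ : Finset (Fin (T.drop (m + 1)).length × Fin (T.drop (m + 1)).length)}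

theorem IsNCPairing.mem_cases_of_firstBlock_mem (hP : IsNCPairing (a :: T) P)
    (hfb : firstBlock a m ∈ P) {q : Fin (a :: T).length × Fin (a :: T).length} (hq : q ∈ P) :
    q = firstBlock a m ∨ (∃ r, q = Prod.map (innerPos a m) (innerPos a m) r) ∨
      ∃ r, q = Prod.map (outerPos a m) (outerPos a m) r := by
  by_cases hfq : q = firstBlock a m
  · exact Or.inl hfq
  have hlt : (q.1 : ℕ) < q.2 := (hP.1 q hq).1
  have h0 : (q.1 : ℕ) ≠ 0 :=
    fun h => hfq (hP.eq_of_touch hq hfb (Or.inl (Fin.ext h)) (Or.inl rfl))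
  have h₁ : (q.1 : ℕ) ≠ m + 1 :=
    fun h => hfq (hP.eq_of_touch hq hfb (Or.inl (Fin.ext h)) (Or.inr rfl))
  have h₂ : (q.2 : ℕ) ≠ m + 1 :=
    fun h => hfq (hP.eq_of_touch hq hfb (Or.inr (Fin.ext h)) (Or.inr rfl))
  have hnest : ¬ ((q.1 : ℕ) < m + 1 ∧ m + 1 < (q.2 : ℕ)) := fun ⟨hl, hr⟩ =>
    hP.2.2 _ hfb q hq ⟨Fin.lt_def.2 (Nat.pos_of_ne_zero h0), Fin.lt_def.2 hl, Fin.lt_def.2 hr⟩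
  right
  rcases Nat.lt_or_gt_of_ne h₂ with h | h
  · obtain ⟨k, hk⟩ : q.1 ∈ Set.range (innerPos a m) := by
      simp only [range_innerPos, Set.mem_ofPred_eq]; omega
    obtain ⟨l, hl⟩ : q.2 ∈ Set.range (innerPos a m) := by
      simp only [range_innerPos, Set.mem_ofPred_eq]; omega
    exact Or.inl ⟨(k, l), by rw [Prod.map, hk, hl]⟩
  · obtain ⟨k, hk⟩ : q.1 ∈ Set.range (outerPos a m) := by
      simp only [range_outerPos, Set.mem_ofPred_eq]; omega
    obtain ⟨l, hl⟩ : q.2 ∈ Set.range (outerPos a m) := by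
      simp only [range_outerPos, Set.mem_ofPred_eq]; omega
    exact Or.inr ⟨(k, l), by rw [Prod.map, hk, hl]⟩

theorem IsNCPairing.exists_eq_innerPos_of_touch (hP : IsNCPairing (a :: T) P)
    (hfb : firstBlock a m ∈ P) {q : Fin (a :: T).length × Fin (a :: T).length} (hq : q ∈ P)
    {k : Fin (T.take m).length} (hk : q.1 = innerPos a m k ∨ q.2 = innerPos a m k) :
    ∃ r, q = Prod.map (innerPos a m) (innerPos a m) r := by
  have := val_lt_of_take k
  rcases hP.mem_cases_of_firstBlock_mem hfb hq with rfl | hin | ⟨r, rfl⟩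
  · simp only [firstBlock, Fin.ext_iff, innerPos_val] at hk; omega
  · exact hin
  · simp only [Prod.map, Fin.ext_iff, innerPos_val, outerPos_val] at hk; omega

theorem IsNCPairing.exists_eq_outerPos_of_touch (hP : IsNCPairing (a :: T) P)
    (hfb : firstBlock a m ∈ P) {q : Fin (a :: T).length × Fin (a :: T).length} (hq : q ∈ P)
    {k : Fin (T.drop (m + 1)).length} (hk : q.1 = outerPos a m k ∨ q.2 = outerPos a m k) :
    ∃ r, q = Prod.map (outerPos a m) (outerPos a m) r := by
  rcases hP.mem_cases_of_firstBlock_mem hfb hq with rfl | ⟨r, rfl⟩ | hout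
  · simp only [firstBlock, Fin.ext_iff, outerPos_val] at hk; omega
  · have := val_lt_of_take r.1
    have := val_lt_of_take r.2
    simp only [Prod.map, Fin.ext_iff, innerPos_val, outerPos_val] at hk; omega
  · exact hout

theorem IsNCPairing.glue_comap (hP : IsNCPairing (a :: T) P) (hfb : firstBlock a m ∈ P) :
    glue a m (comapPairs (innerPos a m) P) (comapPairs (outerPos a m) P) = P := by
  ext q
  rw [mem_glue]
  constructor
  · rintro (rfl | ⟨r, hr, rfl⟩ | ⟨r, hr, rfl⟩)
    exacts [hfb, mem_comapPairs.1 hr, mem_comapPairs.1 hr]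
  · intro hq
    rcases hP.mem_cases_of_firstBlock_mem hfb hq with rfl | ⟨r, rfl⟩ | ⟨r, rfl⟩
    exacts [Or.inl rfl, Or.inr (Or.inl ⟨r, mem_comapPairs.2 hq, rfl⟩),
      Or.inr (Or.inr ⟨r, mem_comapPairs.2 hq, rfl⟩)]

theorem comapPairs_innerPos_glue : comapPairs (innerPos a m) (glue a m Q₁ Q₂) = Q₁ := by
  ext r
  have := val_lt_of_take r.1
  rw [mem_comapPairs, mem_glue]
  constructor
  · rintro (h | ⟨s, hs, h⟩ | ⟨s, -, h⟩)
    · simp only [firstBlock, Prod.ext_iff, Fin.ext_iff, Prod.map, innerPos_val] at h; omega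
    · rwa [← (innerPos_strictMono.injective.prodMap innerPos_strictMono.injective) h]
    · simp only [Prod.ext_iff, Fin.ext_iff, Prod.map, innerPos_val, outerPos_val] at h; omega
  · exact fun hr => Or.inr (Or.inl ⟨r, hr, rfl⟩)

theorem comapPairs_outerPos_glue : comapPairs (outerPos a m) (glue a m Q₁ Q₂) = Q₂ := by
  ext r
  rw [mem_comapPairs, mem_glue]
  constructor
  · rintro (h | ⟨s, -, h⟩ | ⟨s, hs, h⟩)
    · simp only [firstBlock, Prod.ext_iff, Fin.ext_iff, Prod.map, outerPos_val] at h; omega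
    · have := val_lt_of_take s.1
      simp only [Prod.ext_iff, Fin.ext_iff, Prod.map, innerPos_val, outerPos_val] at h; omega
    · rwa [← (outerPos_strictMono.injective.prodMap outerPos_strictMono.injective) h]
  · exact fun hr => Or.inr (Or.inr ⟨r, hr, rfl⟩)

theorem coversExactly_glue (hQ₁ : IsNCPairing (T.take m) Q₁)
    (hQ₂ : IsNCPairing (T.drop (m + 1)) Q₂) : CoversExactly (glue a m Q₁ Q₂) Set.univ := by
  have hsplit : {(firstBlock a m).1, (firstBlock a m).2} ∪
      (innerPos a m '' Set.univ ∪ outerPos a m '' Set.univ) = Set.univ := by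
    ext i
    simp only [Set.image_univ, range_innerPos, range_outerPos, firstBlock, Set.mem_union,
      Set.mem_insert_iff, Set.mem_singleton_iff, Set.mem_ofPred_eq, Fin.ext_iff, Set.mem_univ,
      iff_true]
    omega
  have hdisj₁ : Disjoint (innerPos a m '' Set.univ) (outerPos a m '' Set.univ) := by
    simp only [Set.disjoint_left, Set.image_univ, range_innerPos, range_outerPos,
      Set.mem_ofPred_eq]
    omega
  have hdisj₂ : Disjoint {(firstBlock a m).1, (firstBlock a m).2}
      (innerPos a m '' Set.univ ∪ outerPos a m '' Set.univ) := by
    simp only [Set.disjoint_left, Set.image_univ, range_innerPos, range_outerPos, firstBlock,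
      Set.mem_union, Set.mem_insert_iff, Set.mem_singleton_iff, Set.mem_ofPred_eq, Fin.ext_iff]
    omega
  have h := (coversExactly_singleton _ _).union
    ((hQ₁.coversExactly.image innerPos_strictMono.injective).union
      (hQ₂.coversExactly.image outerPos_strictMono.injective) hdisj₁) hdisj₂
  rwa [hsplit, ← insert_eq] at h

theorem isNCPairing_glue (hm : T.get m = a) (hQ₁ : IsNCPairing (T.take m) Q₁)
    (hQ₂ : IsNCPairing (T.drop (m + 1)) Q₂) : IsNCPairing (a :: T) (glue a m Q₁ Q₂) := by
  refine ⟨fun p hp => ?_, fun i => (coversExactly_glue hQ₁ hQ₂).1 i trivial, ?_⟩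
  · rcases mem_glue.1 hp with rfl | ⟨r, hr, rfl⟩ | ⟨r, hr, rfl⟩
    · exact ⟨Fin.lt_def.2 (Nat.succ_pos _), hm.symm⟩
    · exact ⟨innerPos_strictMono (hQ₁.1 r hr).1, by
        simpa only [Prod.map, get_innerPos] using (hQ₁.1 r hr).2⟩
    · exact ⟨outerPos_strictMono (hQ₂.1 r hr).1, by
        simpa only [Prod.map, get_outerPos] using (hQ₂.1 r hr).2⟩
  · -- Blocks of different kinds are nested or separated; crossings within a kind lift from `Qᵢ`.
    rintro p hp q hq ⟨h₁, h₂, h₃⟩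
    simp only [Fin.lt_def] at h₁ h₂ h₃
    rcases mem_glue.1 hp with rfl | ⟨r, hr, rfl⟩ | ⟨r, hr, rfl⟩ <;>
      rcases mem_glue.1 hq with rfl | ⟨s, hs, rfl⟩ | ⟨s, hs, rfl⟩ <;>
      simp only [firstBlock, Prod.map, innerPos_val, outerPos_val] at h₁ h₂ h₃
    · omega
    · have := val_lt_of_take s.2; omega
    · omega
    · omega
    · exact hQ₁.2.2 r hr s hs ⟨by omega, by omega, by omega⟩
    · have := val_lt_of_take r.2; omega
    · omega
    · have := val_lt_of_take s.1; omega
    · exact hQ₂.2.2 r hr s hs ⟨by omega, by omega, by omega⟩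

open Classical in
theorem card_isNCPairing_firstBlock_mem (hm : T.get m = a) :
    #{P | IsNCPairing (a :: T) P ∧ firstBlock a m ∈ P} =
      ncCount (T.take m) * ncCount (T.drop (m + 1)) := by
  rw [ncCount_eq_card, ncCount_eq_card, ← card_product]
  refine card_bij' (fun P _ => (comapPairs (innerPos a m) P, comapPairs (outerPos a m) P))
    (fun Q _ => glue a m Q.1 Q.2) (fun P hP => ?_) (fun Q hQ => ?_)
    (fun P hP => ?_) (fun Q _ => ?_)
  · obtain ⟨hP, hfb⟩ := (mem_filter.1 hP).2
    simp only [mem_product, mem_filter, mem_univ, true_and]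
    exact ⟨hP.comap innerPos_strictMono get_innerPos
        fun q hq _ hk => hP.exists_eq_innerPos_of_touch hfb hq hk,
      hP.comap outerPos_strictMono get_outerPos
        fun q hq _ hk => hP.exists_eq_outerPos_of_touch hfb hq hk⟩
  · simp only [mem_product, mem_filter, mem_univ, true_and] at hQ ⊢
    exact ⟨isNCPairing_glue hm hQ.1 hQ.2, mem_insert_self _ _⟩
  · obtain ⟨hP, hfb⟩ := (mem_filter.1 hP).2
    exact hP.glue_comap hfb
  · exact Prod.ext comapPairs_innerPos_glue comapPairs_outerPos_glue

open Classical in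
theorem ncCount_cons (a : Fin n) (T : Word n) :
    ncCount (a :: T) = ∑ m : Fin T.length,
      if T.get m = a then ncCount (T.take m) * ncCount (T.drop (m + 1)) else 0 := by
  have hpartner :
      ({P | IsNCPairing (a :: T) P} : Finset (Finset (Fin (a :: T).length × _))) =
      univ.biUnion fun m => {P | IsNCPairing (a :: T) P ∧ firstBlock a m ∈ P} := by
    ext P
    simp only [mem_filter, mem_univ, true_and, mem_biUnion, exists_and_left, iff_self_and]
    intro hP
    obtain ⟨q, ⟨hq, h0⟩, -⟩ := hP.2.1 ⟨0, Nat.succ_pos _⟩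
    have hlt : (q.1 : ℕ) < q.2 := (hP.1 q hq).1
    have h0' : (q.1 : ℕ) = 0 ∨ (q.2 : ℕ) = 0 := h0.imp (congrArg Fin.val) (congrArg Fin.val)
    refine ⟨⟨q.2 - 1, by have := q.2.isLt; simp at this; omega⟩, ?_⟩
    convert hq
    simp only [firstBlock, Prod.ext_iff, Fin.ext_iff]
    omega
  rw [ncCount_eq_card, hpartner, card_biUnion]
  · refine sum_congr rfl fun m _ => ?_
    split_ifs with hm
    · exact card_isNCPairing_firstBlock_mem hm
    · rw [card_eq_zero, filter_eq_empty_iff]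
      exact fun P _ ⟨hP, hfb⟩ => hm (hP.1 _ hfb).2.symm
  · intro m _ m' _ hmm'
    refine disjoint_left.2 fun P hP hP' => hmm' ?_
    have h := (mem_filter.1 hP).2.1.eq_of_touch (mem_filter.1 hP).2.2 (mem_filter.1 hP').2.2
      (Or.inl rfl) (Or.inl rfl)
    simpa [firstBlock, Fin.ext_iff] using h

end FirstBlockDecomposition

section Semicircle

variable {n : ℕ}

noncomputable def ncCountS (n : ℕ) : Word n → ℂ := fun F => ncCount F

theorem Psemi_add_oneS : Psemi n + oneS = ncCountS n := by
  funext F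
  by_cases hF : F = []
  · simp [hF, Psemi, oneS, ncCountS, ncCount_nil]
  · simp [hF, Psemi, oneS, ncCountS]

theorem ncCountS_cons (a : Fin n) (T : Word n) :
    ncCountS n (a :: T) = mulS (ncCountS n) (mulS (genS a) (ncCountS n)) T := by
  rw [ncCountS, ncCount_cons, mulS, sum_range_succ, List.drop_length, genS_mulS_nil, mul_zero,
    add_zero, ← Fin.sum_univ_eq_sum_range]
  push_cast
  refine sum_congr rfl fun m _ => ?_
  rw [List.drop_eq_getElem_cons m.isLt, genS_mulS_cons, List.get_eq_getElem]
  split_ifs <;> simp [ncCountS]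

theorem Qsemi_eq : Qsemi n = ∑ i : Fin n,
    let x := FreeMonoid.of (Sum.inl i)
    let y := FreeMonoid.of (Sum.inr 0)
    (MonoidAlgebra.single (x * y * (x * y)) 1 + MonoidAlgebra.single (x * (x * y)) 1 +
      (MonoidAlgebra.single (x * y * x) 1 + MonoidAlgebra.single (x * x) 1)) := by
  simp only [Qsemi, pow_two, mul_add, add_mul, mul_one, MonoidAlgebra.single_mul_single]

theorem Qsemi_coeff_eq_zero_of_length_lt {w : FreeMonoid (Fin n ⊕ Fin 1)} (hw : w.length < 2) :
    (Qsemi n).coeff w = 0 := by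
  simp (disch := simp only [FreeMonoid.length_mul, FreeMonoid.length_of]; omega) only [Qsemi_eq,
    MonoidAlgebra.coeff_sum, MonoidAlgebra.coeff_add, MonoidAlgebra.coeff_single,
    Finset.sum_apply', Finsupp.add_apply, FreeMonoid.single_apply_of_length_ne, add_zero,
    Finset.sum_const_zero]

theorem substS_Qsemi : substS (Qsemi n) (fun _ => Psemi n) =
    ∑ i, mulS (genS i) (mulS (ncCountS n) (mulS (genS i) (ncCountS n))) := by
  rw [Qsemi_eq, substS_sum]
  refine sum_congr rfl fun i _ => ?_
  simp only [substS_add, substS_single, one_smul, FreeMonoid.toList_mul, FreeMonoid.toList_of,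
    List.nil_append, List.cons_append, List.map, letterS, prodS, mulS_oneS,
    ← Psemi_add_oneS, mulS_add, add_mulS, oneS_mulS]

end Semicircle

/-- `Q₁ = Σᵢ (X_i·(Y₁ + 1))²` is a proper algebraic system of size `L = 1` (its
coefficients at the empty word and at `Y₁` vanish), and `P_semi` is a proper solution:
`P_semi = Σᵢ (X_i·(P_semi + 1))²`, computed coefficientwise. -/
theorem Psemi_proper_algebraic_system (n : ℕ) :
    ((Qsemi n).coeff (1 : FreeMonoid (Fin n ⊕ Fin 1)) = 0 ∧
      (Qsemi n).coeff (FreeMonoid.of (Sum.inr (0 : Fin 1))) = 0) ∧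
    (Psemi n [] = 0 ∧
      ∀ F : Word n, Psemi n F = substS (Qsemi n) (fun _ : Fin 1 => Psemi n) F) := by
  refine ⟨⟨Qsemi_coeff_eq_zero_of_length_lt (by simp),
    Qsemi_coeff_eq_zero_of_length_lt (by simp)⟩, by simp [Psemi], fun F => ?_⟩
  rw [substS_Qsemi, Finset.sum_apply]
  cases F with
  | nil => simp [Psemi, genS_mulS_nil]
  | cons a T =>
    simp only [genS_mulS_cons, Fintype.sum_ite_eq, ← ncCountS_cons]
    simp [Psemi, ncCountS]
end

section
/- Let R be a ring, X a finite alphabet, and a : F(X) → R a series with a(e) = 0 that is recognized by a monoid homomorphism μ : F(X) → M_N(R) of size N ≥ 2. Define the pseudo-inverse a* : F(X) → R by a*(e) = 0 and, for a nonempty word F, a*(F) = Σ_{k=1}^{|F|} Σ ∏_{j=1}^{k} a(F_j), where the inner sum ranges over all factorizations F = F₁⋯F_k into nonempty words. Then a* is recognized by some monoid homomorphism μ' : F(X) → M_N(R) of the same size N. -/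
/-!
Put `E = e_{N1}` and `μ'(x) = μ(x) (1 + E)`. Expanding `μ'(x₁⋯x_m) = ∏ μ(x_i) (1 + E)` according
to the first factor in which `E` is chosen gives `μ'(F) = μ(F) + Σ_{F = GH, G ≠ e} μ(G) E μ'(H)`.
Since `(A E B)_{1N} = A_{1N} B_{1N}`, the series `F ↦ μ'(F)_{1N}` therefore solves `f = a + a f`.
Splitting off the first factor of a factorization shows that `a*` solves the same equation, and
its solution is unique because `(a f)(F)` only involves values of `f` on words shorter than `F`.
-/

open scoped BigOperators

/-- Pseudo-inverse `a* = Σ_{k ≥ 1} a^k` of a series with zero constant coefficient: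
`a*(e) = 0` and, for `F ≠ e`, `a*(F) = Σ_{k=1}^{|F|} Σ_{F = F₁⋯F_k, F_j ≠ e} ∏_j a(F_j)`
(factorizations of `F` into nonempty words correspond to compositions of `|F|`). -/
noncomputable def starS {n : ℕ} {R : Type*} [Ring R] (a : Word n → R) : Word n → R :=
  fun F => if F = [] then 0 else
    ∑ c : Composition F.length, ((F.splitWrtComposition c).map a).prod

open Finset

namespace Composition

def cons {m : ℕ} (k : Fin (m + 1)) (c : Composition (m - k)) : Composition (m + 1) where
  blocks := (k + 1) :: c.blocks
  blocks_pos := by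
    rintro i (_ | ⟨_, hi⟩)
    · omega
    · exact c.blocks_pos hi
  blocks_sum := by
    simp only [List.sum_cons, c.blocks_sum]
    omega

theorem cons_injective {m : ℕ} :
    Function.Injective fun p : (k : Fin (m + 1)) × Composition (m - k) => cons p.1 p.2 := by
  rintro ⟨k, c⟩ ⟨k', c'⟩ h
  obtain ⟨hk, hc⟩ := List.cons_eq_cons.mp (congrArg blocks h)
  obtain rfl : k = k' := Fin.ext (by simpa using hk)
  rw [Composition.ext (x := c) hc]

theorem cons_surjective {m : ℕ} :
    Function.Surjective fun p : (k : Fin (m + 1)) × Composition (m - k) => cons p.1 p.2 := by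
  rintro ⟨_ | ⟨b, t⟩, hpos, hsum⟩
  · simp at hsum
  · have hb : 0 < b := hpos List.mem_cons_self
    simp only [List.sum_cons] at hsum
    refine ⟨⟨⟨b - 1, by omega⟩, ⟨t, fun hi => hpos (List.mem_cons_of_mem _ hi), ?_⟩⟩, ?_⟩
    · simp only
      omega
    · ext1
      simp only [cons, List.cons.injEq, and_true]
      omega

theorem sum_succ {M : Type*} [AddCommMonoid M] {m : ℕ} (f : Composition (m + 1) → M) :
    ∑ c, f c = ∑ k : Fin (m + 1), ∑ c : Composition (m - k), f (cons k c) := by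
  rw [← Fintype.sum_bijective _ ⟨cons_injective, cons_surjective⟩ _ f fun _ => rfl,
    ← univ_sigma_univ, sum_sigma]

end Composition

section Factorizations

variable {α R : Type*} [Semiring R]

/-- `Σ_{k ≥ 0} a^k`; it agrees with `starS a` except at the empty word, where it is `1`. -/
def factorizationSum (a : List α → R) (F : List α) : R :=
  ∑ c : Composition F.length, ((F.splitWrtComposition c).map a).prod

theorem sum_composition_eq_factorizationSum (a : List α → R) {F : List α} {m : ℕ}
    (h : F.length = m) :
    ∑ c : Composition m, ((F.splitWrtComposition c).map a).prod = factorizationSum a F := by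
  subst h
  rfl

@[simp]
theorem factorizationSum_nil (a : List α → R) : factorizationSum a [] = 1 := by
  have hblocks (c : Composition 0) : c.blocks = [] := c.blocks_eq_nil.mpr rfl
  simp [factorizationSum, List.splitWrtComposition, hblocks, composition_card,
    List.splitWrtCompositionAux]

theorem factorizationSum_cons (a : List α → R) (x : α) (G : List α) :
    factorizationSum a (x :: G) = ∑ l ∈ range (G.length + 1),
      a ((x :: G).take (l + 1)) * factorizationSum a (G.drop l) := by
  rw [factorizationSum, List.length_cons, Composition.sum_succ, ← Fin.sum_univ_eq_sum_range]
  refine sum_congr rfl fun k _ => ?_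
  rw [← sum_composition_eq_factorizationSum a (List.length_drop ..), mul_sum]
  refine sum_congr rfl fun c _ => ?_
  simp [List.splitWrtComposition, Composition.cons, List.splitWrtCompositionAux_cons]

/-- Only nonempty left factors `F.take (l + 1)` occur: this is the Cauchy product `a f` when
`a [] = 0`. -/
def cauchyMul (a f : List α → R) (F : List α) : R :=
  ∑ l ∈ range F.length, a (F.take (l + 1)) * f (F.drop (l + 1))

theorem eq_of_eq_add_cauchyMul {a f g : List α → R} (hf : f = a + cauchyMul a f)
    (hg : g = a + cauchyMul a g) (F : List α) : f F = g F := by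
  rw [hf, hg]
  refine congrArg (a F + ·) (sum_congr rfl fun l hl => ?_)
  rw [eq_of_eq_add_cauchyMul hf hg (F.drop (l + 1))]
termination_by F.length
decreasing_by
  simp only [mem_range] at hl
  simp only [List.length_drop]
  omega

theorem apply_ofList_eq_add_cauchyMul {A : Type*} [Semiring A] {μ ν : FreeMonoid α →* A} {e : A}
    (hν : ∀ x, ν (.of x) = μ (.of x) * (1 + e)) (F : List α) :
    ν (.ofList F) = μ (.ofList F)
      + cauchyMul (fun G => μ (.ofList G) * e) (fun H => ν (.ofList H)) F := by
  induction F with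
  | nil => simp [cauchyMul]
  | cons x G ih =>
    simp only [cauchyMul, List.length_cons, sum_range_succ', List.take_succ_cons,
      List.drop_succ_cons, FreeMonoid.ofList_cons, map_mul, hν] at ih ⊢
    rw [List.take_zero, List.drop_zero, FreeMonoid.ofList_nil, map_one, mul_one, mul_add, mul_one,
      add_mul, ih, mul_add, mul_sum]
    simp only [mul_assoc]
    abel

end Factorizations

theorem starS_eq_add_cauchyMul {n : ℕ} {R : Type*} [Ring R] {a : Word n → R} (ha : a [] = 0) :
    starS a = a + cauchyMul a (starS a) := by
  funext F
  cases F with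
  | nil => simp [starS, ha, cauchyMul]
  | cons x G =>
    have hstar {H : Word n} (h : H ≠ []) : starS a H = factorizationSum a H := if_neg h
    rw [hstar (List.cons_ne_nil x G), factorizationSum_cons, Pi.add_apply, cauchyMul,
      List.length_cons, sum_range_succ, sum_range_succ]
    simp only [List.drop_succ_cons, List.drop_length, factorizationSum_nil]
    rw [show starS a [] = 0 from if_pos rfl, List.take_of_length_le (by simp), mul_one, mul_zero,
      add_zero, add_comm]
    refine congrArg (a (x :: G) + ·) (sum_congr rfl fun l hl => ?_)
    rw [hstar (by simpa [List.drop_eq_nil_iff] using hl)]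

theorem Matrix.mul_single_mul_apply {l m n o R : Type*} [Fintype m] [Fintype n] [DecidableEq m]
    [DecidableEq n] [Semiring R] (A : Matrix l m R) (B : Matrix n o R) (i : l) (j : o) (k : m)
    (k' : n) (c : R) :
    (A * Matrix.single k k' c * B) i j = A i k * c * B k' j := by
  simp [Matrix.mul_apply, Matrix.single, ite_and]

/-- If a series `a` with `a(e) = 0` is recognized by a monoid homomorphism
`μ : F(X) → M_N(R)` of size `N ≥ 2` (i.e. `a(F) = μ(F)_{1,N}`), then its pseudo-inverse
`a*` is recognized by some monoid homomorphism of the same size `N`. -/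
theorem starS_recognized {R : Type*} [Ring R] {n N : ℕ} (hN : 2 ≤ N)
    (a : Word n → R) (ha : a [] = 0)
    (μ : FreeMonoid (Fin n) →* Matrix (Fin N) (Fin N) R)
    (hrec : ∀ F : Word n, a F = μ (FreeMonoid.ofList F) ⟨0, by omega⟩ ⟨N - 1, by omega⟩) :
    ∃ μ' : FreeMonoid (Fin n) →* Matrix (Fin N) (Fin N) R,
      ∀ F : Word n, starS a F = μ' (FreeMonoid.ofList F) ⟨0, by omega⟩ ⟨N - 1, by omega⟩ := by
  set i : Fin N := ⟨0, by omega⟩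
  set j : Fin N := ⟨N - 1, by omega⟩
  let μ' := FreeMonoid.lift fun x => μ (.of x) * (1 + Matrix.single j i 1)
  have hμ' (x : Fin n) : μ' (.of x) = μ (.of x) * (1 + Matrix.single j i 1) :=
    FreeMonoid.lift_eval_of ..
  refine ⟨μ', eq_of_eq_add_cauchyMul (starS_eq_add_cauchyMul ha) (funext fun F => ?_)⟩
  rw [apply_ofList_eq_add_cauchyMul hμ', Matrix.add_apply, cauchyMul, Matrix.sum_apply]
  simp only [Matrix.mul_single_mul_apply, mul_one, ← hrec]
  rfl
end

section
/- Let R be a ring, X a finite alphabet, and let a, b : F(X) → R be series with a(e) = b(e) = 0, recognized by monoid homomorphisms of sizes N₁ ≥ 2 and N₂ ≥ 2 respectively. Then the product series a·b, defined by (a·b)(F) = Σ_{F = G·H} a(G)·b(H) (sum over all factorizations of F into two words G, H), is recognized by some monoid homomorphism of size N₁ + N₂. -/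
/-!
Glue the two representations into the block upper-triangular representation sending a letter `x`
to `[[μ₁ x, μ₁ x E], [0, μ₂ x]]`, where `E` is the matrix unit linking the last state of the first
automaton to the first state of the second. By induction on the word, the upper-right block of the
image of `F` is `∑ μ₁(G) E μ₂(H)` over the factorizations `F = G H` with `G` nonempty, so its
corner entry is `∑ a(G) b(H)` over those factorizations, which is `(a·b)(F)` because `a(e) = 0`.
-/

open scoped BigOperators

open Matrix

theorem Matrix.mul_single_one_mul_apply {l m n o α : Type*} [Fintype m] [Fintype n]
    [DecidableEq m] [DecidableEq n] [NonAssocSemiring α]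
    (A : Matrix l m α) (B : Matrix n o α) (p : m) (q : n) (i : l) (j : o) :
    (A * single p q (1 : α) * B) i j = A i p * B q j := by
  rw [mul_apply, Finset.sum_eq_single q
      (fun r _ hr => by rw [mul_single_apply_of_ne _ _ _ _ _ hr, zero_mul]) (by simp),
    mul_single_apply_same, mul_one]

section BlockProduct

variable {α m n R : Type*} [Fintype m] [Fintype n] [DecidableEq m] [DecidableEq n] [Semiring R]
  (μ₁ : FreeMonoid α →* Matrix m m R) (μ₂ : FreeMonoid α →* Matrix n n R) (E : Matrix m n R)

def blockProductHom : FreeMonoid α →* Matrix (m ⊕ n) (m ⊕ n) R :=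
  FreeMonoid.lift fun x =>
    fromBlocks (μ₁ (.of x)) (μ₁ (.of x) * E) 0 (μ₂ (.of x))

theorem blockProductHom_ofList (F : List α) :
    blockProductHom μ₁ μ₂ E (.ofList F) =
      fromBlocks (μ₁ (.ofList F))
        (∑ k ∈ Finset.range F.length,
          μ₁ (.ofList (F.take (k + 1))) * E * μ₂ (.ofList (F.drop (k + 1))))
        0 (μ₂ (.ofList F)) := by
  induction F with
  | nil => simp [FreeMonoid.ofList_nil, fromBlocks_one]
  | cons x F ih =>
    rw [FreeMonoid.ofList_cons, map_mul, ih, blockProductHom, FreeMonoid.lift_eval_of,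
      fromBlocks_multiply, map_mul, map_mul, List.length_cons, Finset.sum_range_succ',
      Matrix.mul_sum]
    simp [Matrix.mul_assoc, FreeMonoid.ofList_cons]

theorem blockProductHom_single_ofList_inl_inr (p : m) (q : n) (F : List α) (i : m) (j : n) :
    blockProductHom μ₁ μ₂ (single p q 1) (.ofList F) (.inl i) (.inr j) =
      ∑ k ∈ Finset.range F.length,
        μ₁ (.ofList (F.take (k + 1))) i p * μ₂ (.ofList (F.drop (k + 1))) q j := by
  simp only [blockProductHom_ofList, fromBlocks_apply₁₂, Matrix.sum_apply, mul_single_one_mul_apply]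

end BlockProduct

theorem mulS_eq_sum_of_apply_nil {n : ℕ} {R : Type*} [Ring R] {a : Word n → R} (b : Word n → R)
    (ha : a [] = 0) (F : Word n) :
    mulS a b F = ∑ k ∈ Finset.range F.length, a (F.take (k + 1)) * b (F.drop (k + 1)) := by
  simp [mulS, Finset.sum_range_succ', ha]

/-- If series `a, b` with `a(e) = b(e) = 0` are recognized by monoid homomorphisms
`F(X) → M_{N₁}(R)` and `F(X) → M_{N₂}(R)` of sizes `N₁, N₂ ≥ 2`, then the product series
`a·b`, `(a·b)(F) = Σ_{F = G·H} a(G)·b(H)`, is recognized by some monoid homomorphism of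
size `N₁ + N₂`. -/
theorem product_recognized {R : Type*} [Ring R] {n N₁ N₂ : ℕ}
    (hN₁ : 2 ≤ N₁) (hN₂ : 2 ≤ N₂)
    (a b : Word n → R) (ha : a [] = 0)
    (μ₁ : FreeMonoid (Fin n) →* Matrix (Fin N₁) (Fin N₁) R)
    (μ₂ : FreeMonoid (Fin n) →* Matrix (Fin N₂) (Fin N₂) R)
    (hrec₁ : ∀ F : Word n, a F = μ₁ (FreeMonoid.ofList F) ⟨0, by omega⟩ ⟨N₁ - 1, by omega⟩)
    (hrec₂ : ∀ F : Word n, b F = μ₂ (FreeMonoid.ofList F) ⟨0, by omega⟩ ⟨N₂ - 1, by omega⟩) :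
    ∃ μ : FreeMonoid (Fin n) →* Matrix (Fin (N₁ + N₂)) (Fin (N₁ + N₂)) R,
      ∀ F : Word n, mulS a b F =
        μ (FreeMonoid.ofList F) ⟨0, by omega⟩ ⟨N₁ + N₂ - 1, by omega⟩ := by
  refine ⟨(reindexRingEquiv R finSumFinEquiv).toMulEquiv.toMonoidHom.comp
    (blockProductHom μ₁ μ₂ (single ⟨N₁ - 1, by omega⟩ ⟨0, by omega⟩ 1)), fun F => ?_⟩
  have hfirst : finSumFinEquiv.symm (⟨0, by omega⟩ : Fin (N₁ + N₂)) = .inl ⟨0, by omega⟩ :=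
    finSumFinEquiv_symm_apply_castAdd (⟨0, by omega⟩ : Fin N₁)
  have hlast : finSumFinEquiv.symm (⟨N₁ + N₂ - 1, by omega⟩ : Fin (N₁ + N₂)) =
      .inr ⟨N₂ - 1, by omega⟩ := by
    rw [← finSumFinEquiv_symm_apply_natAdd]
    congr 1
    ext
    simp only [Fin.natAdd_mk]
    omega
  simp only [MonoidHom.comp_apply, MulEquiv.coe_toMonoidHom, RingEquiv.toMulEquiv_eq_coe,
    RingEquiv.coe_toMulEquiv, coe_reindexRingEquiv, reindex_apply, submatrix_apply, hfirst, hlast,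
    blockProductHom_single_ofList_inl_inr, mulS_eq_sum_of_apply_nil b ha, hrec₁, hrec₂]
end

section
/- Let a : F(X) → ℂ[z] be a series with a(e) = 0 which is good, meaning that for every natural number m the set {F ∈ F(X) : the coefficient of z^m in a(F) is nonzero} is finite. Suppose (Q₁, …, Q_L) is a proper algebraic system over ℂ[z] with a proper solution (p₁, …, p_L) such that p₁ = a, and let a^t denote the iterates (a⁰ = 0, a^{t+1}_i = Q_i(X₁, …, Xₙ, a₁^t, …, a_L^t)). Fix a positive integer M. Then: (1) the set {|F| : F ∈ F(X) and there exists 0 ≤ m ≤ M with the coefficient of z^m in a(F) nonzero} is finite; and (2) for every M' greater than or equal to every element of that set and every 0 ≤ m ≤ M, Σ_{F ∈ F(X)} [z^m] a(F) = Σ_{F ∈ F(X), |F| ≤ M'} [z^m] ⟨a₁^{M'}⟩_F, where the left-hand sum has only finitely many nonzero terms and [z^m] denotes the coefficient of z^m. -/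
open scoped BigOperators

/-- A proper algebraic system: a tuple of noncommutative polynomials in `R⟨X ⊔ Y⟩` whose
coefficients at the empty word and at each one-letter word `Y_j` vanish. -/
def IsProperSystem {n L : ℕ} {R : Type*} [Ring R]
    (Q : Fin L → MonoidAlgebra R (FreeMonoid (Fin n ⊕ Fin L))) : Prop :=
  ∀ i, (Q i).coeff (1 : FreeMonoid (Fin n ⊕ Fin L)) = 0 ∧
    ∀ j, (Q i).coeff (FreeMonoid.of (Sum.inr j)) = 0

/-- A proper solution of a proper algebraic system: series with zero constant coefficient
satisfying `p_i = Q_i(X₁,…,Xₙ,p₁,…,p_L)` coefficientwise. -/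
def IsProperSolution {n L : ℕ} {R : Type*} [Ring R]
    (Q : Fin L → MonoidAlgebra R (FreeMonoid (Fin n ⊕ Fin L)))
    (p : Fin L → Word n → R) : Prop :=
  ∀ i, p i [] = 0 ∧ ∀ F, p i F = substS (Q i) p F

/-!
Properness makes the substitution `Q_i(X, q)` contractive for the length filtration: every
monomial of `Q_i` contains a letter `X_k` or at least two letters `Y_j`, and the `q_j` have zero
constant term, so on words of length `≤ t + 1` the series `Q_i(X, q)` only sees the coefficients
of `q` on words of length `≤ t`. By induction the iterate `a^t` agrees with the solution `p` on
all words of length `≤ t`. Since `[z^m] a(F)` vanishes whenever `|F| > M'`, both sums in the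
theorem run over words of length `≤ M'`, where `a^{M'}_1 = p_1 = a`.
-/

section LengthFiltration

variable {n : ℕ} {R : Type*} [Ring R]

lemma prodS_apply_eq_zero_of_length_lt :
    ∀ (l : List (Word n → R)), (∀ q ∈ l, q [] = 0) → ∀ {F : Word n},
      F.length < l.length → prodS l F = 0
  | [], _, F, hF => absurd hF (Nat.not_lt_zero _)
  | q :: l, hl, F, hF => by
    simp only [prodS, mulS]
    refine Finset.sum_eq_zero fun i hi => ?_
    rcases Nat.eq_zero_or_pos i with rfl | hi0
    · simp [hl q List.mem_cons_self]
    · have hshort : (F.drop i).length < l.length := by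
        simp only [Finset.mem_range, List.length_drop, List.length_cons] at hi hF ⊢
        omega
      rw [prodS_apply_eq_zero_of_length_lt l (fun q hq => hl q (List.mem_cons_of_mem _ hq)) hshort,
        mul_zero]

lemma letterS_apply_nil {σ : Type*} {q : σ → Word n → R} (hq : ∀ j, q j [] = 0)
    (x : Fin n ⊕ σ) : letterS q x [] = 0 := by
  cases x with
  | inl i => simp [letterS, genS]
  | inr j => exact hq j

lemma prodS_map_letterS_apply_eq_zero_of_length_lt {σ : Type*} {q : σ → Word n → R}
    (hq : ∀ j, q j [] = 0) (W : List (Fin n ⊕ σ)) {F : Word n} (hF : F.length < W.length) :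
    prodS (W.map (letterS q)) F = 0 :=
  prodS_apply_eq_zero_of_length_lt _
    (by simpa only [List.forall_mem_map] using fun x _ => letterS_apply_nil hq x)
    (by rwa [List.length_map])

variable {σ : Type*} {q q' : σ → Word n → R} {t : ℕ}

lemma prodS_map_letterS_congr (hq : ∀ j, q j [] = 0)
    (hqq' : ∀ j (F : Word n), F.length ≤ t → q j F = q' j F) :
    ∀ (W : List (Fin n ⊕ σ)) {F : Word n}, F.length < t + W.length →
      prodS (W.map (letterS q)) F = prodS (W.map (letterS q')) F
  | [], F, _ => rfl
  | x :: W, F, hF => by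
    have hq' : ∀ j, q' j [] = 0 := fun j => hqq' j [] (Nat.zero_le t) ▸ hq j
    simp only [List.map_cons, prodS, mulS]
    refine Finset.sum_congr rfl fun i hi => ?_
    simp only [Finset.mem_range, List.length_cons] at hi hF
    rcases Nat.eq_zero_or_pos i with rfl | hi0
    · simp [letterS_apply_nil hq, letterS_apply_nil hq']
    rcases le_or_gt i t with hit | hti
    · have hhead : letterS q x (F.take i) = letterS q' x (F.take i) := by
        cases x with
        | inl _ => rfl
        | inr j => exact hqq' j _ (by rw [List.length_take]; omega)
      rw [hhead, prodS_map_letterS_congr hq hqq' W (by rw [List.length_drop]; omega)]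
    · have htail : (F.drop i).length < W.length := by rw [List.length_drop]; omega
      rw [prodS_map_letterS_apply_eq_zero_of_length_lt hq W htail,
        prodS_map_letterS_apply_eq_zero_of_length_lt hq' W htail, mul_zero, mul_zero]

lemma substS_congr_of_length_le_succ (P : MonoidAlgebra R (FreeMonoid (Fin n ⊕ σ)))
    (hP₁ : P.coeff 1 = 0) (hPY : ∀ j, P.coeff (FreeMonoid.of (Sum.inr j)) = 0)
    (hq : ∀ j, q j [] = 0) (hqq' : ∀ j (F : Word n), F.length ≤ t → q j F = q' j F)
    {F : Word n} (hF : F.length ≤ t + 1) :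
    substS P q F = substS P q' F := by
  refine Finset.sum_congr rfl fun W _ => ?_
  match hW : FreeMonoid.toList W with
  | [] =>
    rw [show W = 1 from FreeMonoid.toList.injective hW, hP₁, zero_mul, zero_mul]
  | [Sum.inl _] => rfl
  | [Sum.inr j] =>
    rw [show W = FreeMonoid.of (Sum.inr j) from FreeMonoid.toList.injective hW, hPY j,
      zero_mul, zero_mul]
  | _ :: _ :: _ =>
    rw [prodS_map_letterS_congr hq hqq' _ (by simp only [List.length_cons]; omega)]

end LengthFiltration

lemma iterate_apply_eq_of_length_le {n L : ℕ} {R : Type*} [Ring R]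
    {Q : Fin L → MonoidAlgebra R (FreeMonoid (Fin n ⊕ Fin L))} (hQ : IsProperSystem Q)
    {p : Fin L → Word n → R} (hp : IsProperSolution Q p)
    {A : ℕ → Fin L → Word n → R} (hA0 : ∀ i, A 0 i [] = 0)
    (hAS : ∀ t i, A (t + 1) i = substS (Q i) (A t)) :
    ∀ t i (F : Word n), F.length ≤ t → A t i F = p i F
  | 0, i, F, hF => by rw [List.length_eq_zero_iff.mp (Nat.le_zero.mp hF), hA0, (hp i).1]
  | t + 1, i, F, hF => by
    have ih := iterate_apply_eq_of_length_le hQ hp hA0 hAS t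
    rw [hAS, (hp i).2]
    exact substS_congr_of_length_le_succ (Q i) (hQ i).1 (hQ i).2
      (fun j => (ih j [] (Nat.zero_le t)).trans (hp j).1) ih hF

lemma finite_lengths_of_coeff_ne_zero {n : ℕ} {R : Type*} [Semiring R]
    {a : Word n → Polynomial R}
    (hgood : ∀ m : ℕ, {F : Word n | (a F).coeff m ≠ 0}.Finite) (M : ℕ) :
    {l : ℕ | ∃ F : Word n, F.length = l ∧ ∃ m ≤ M, (a F).coeff m ≠ 0}.Finite := by
  have hwords : {F : Word n | ∃ m ≤ M, (a F).coeff m ≠ 0}.Finite :=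
    ((Set.finite_Iic M).biUnion fun m _ => hgood m).subset
      fun F ⟨m, hm, h⟩ => Set.mem_biUnion hm h
  exact (hwords.image List.length).subset fun l ⟨F, hF, hm⟩ => ⟨F, hm, hF⟩

theorem good_series_moments_by_iteration_general {n L : ℕ} (hL : 0 < L)
    (a : Word n → Polynomial ℂ) (hgood : ∀ m : ℕ, {F : Word n | (a F).coeff m ≠ 0}.Finite)
    (Q : Fin L → MonoidAlgebra (Polynomial ℂ) (FreeMonoid (Fin n ⊕ Fin L)))
    (hQ : IsProperSystem Q)
    (p : Fin L → Word n → Polynomial ℂ) (hp : IsProperSolution Q p)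
    (hp₁ : p ⟨0, hL⟩ = a)
    (A : ℕ → Fin L → Word n → Polynomial ℂ)
    (hA0 : A 0 = fun _ _ => 0)
    (hAS : ∀ t i, A (t + 1) i = substS (Q i) (A t))
    (M : ℕ) :
    ({l : ℕ | ∃ F : Word n, F.length = l ∧ ∃ m ≤ M, (a F).coeff m ≠ 0}).Finite ∧
    ∀ M' : ℕ,
      (∀ l ∈ {l : ℕ | ∃ F : Word n, F.length = l ∧ ∃ m ≤ M, (a F).coeff m ≠ 0}, l ≤ M') →
      ∀ m ≤ M,
        (∑ᶠ F : Word n, (a F).coeff m) =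
          ∑ᶠ F ∈ {F : Word n | F.length ≤ M'}, ((A M' ⟨0, hL⟩) F).coeff m := by
  refine ⟨finite_lengths_of_coeff_ne_zero hgood M, fun M' hM' m hm => ?_⟩
  have hsupport : ∀ F ∈ Function.support fun F : Word n => (a F).coeff m,
      F ∈ Set.univ ↔ F ∈ {F : Word n | F.length ≤ M'} :=
    fun F hF => iff_of_true trivial (hM' F.length ⟨F, rfl, m, hm, hF⟩)
  have hiterate : ∀ F : Word n, F.length ≤ M' → A M' ⟨0, hL⟩ F = a F := fun F hF => by
    rw [iterate_apply_eq_of_length_le hQ hp (by simp [hA0]) hAS M' _ F hF, hp₁]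
  rw [← finsum_mem_univ, finsum_mem_inter_support_eq' _ _ _ hsupport]
  exact finsum_mem_congr rfl fun F hF => by rw [hiterate F hF]

/-- The paper's Step 4 theorem. Let `a : F(X) → ℂ[z]` be a good series (for each `m`,
only finitely many words have a nonzero `z^m`-coefficient) with `a(e) = 0`, which is the
first component of a proper solution of a proper algebraic system `(Q₁,…,Q_L)`, and let
`a^t` be the iterates of the system. Fix `M ≥ 1`. Then (1) the set of lengths of words
carrying a nonzero `z^m`-coefficient for some `m ≤ M` is finite, and (2) for every `M'`
at least every element of that set, and every `m ≤ M`,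
`Σ_F [z^m] a(F) = Σ_{|F| ≤ M'} [z^m] ⟨a₁^{M'}⟩_F`. -/
theorem good_series_moments_by_iteration {n L : ℕ} (hL : 0 < L)
    (a : Word n → Polynomial ℂ) (hae : a [] = 0)
    (hgood : ∀ m : ℕ, {F : Word n | (a F).coeff m ≠ 0}.Finite)
    (Q : Fin L → MonoidAlgebra (Polynomial ℂ) (FreeMonoid (Fin n ⊕ Fin L)))
    (hQ : IsProperSystem Q)
    (p : Fin L → Word n → Polynomial ℂ) (hp : IsProperSolution Q p)
    (hp₁ : p ⟨0, hL⟩ = a)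
    (A : ℕ → Fin L → Word n → Polynomial ℂ)
    (hA0 : A 0 = fun _ _ => 0)
    (hAS : ∀ t i, A (t + 1) i = substS (Q i) (A t))
    (M : ℕ) (hM : 0 < M) :
    ({l : ℕ | ∃ F : Word n, F.length = l ∧ ∃ m ≤ M, (a F).coeff m ≠ 0}).Finite ∧
    ∀ M' : ℕ,
      (∀ l ∈ {l : ℕ | ∃ F : Word n, F.length = l ∧ ∃ m ≤ M, (a F).coeff m ≠ 0}, l ≤ M') →
      ∀ m ≤ M,
        (∑ᶠ F : Word n, (a F).coeff m) =
          ∑ᶠ F ∈ {F : Word n | F.length ≤ M'}, ((A M' ⟨0, hL⟩) F).coeff m :=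
  good_series_moments_by_iteration_general hL a hgood Q hQ p hp hp₁ A hA0 hAS M
end
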